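/- Let G be a connected graph with port set P = pG and signature ε = sG, and let g ⊆ P be a port assignment whose cardinality is congruent to ε modulo 2. Then G has a semi-Kekulé state W with W|P = g. -/

import Mathlib

/-!
Let `T` be the set of internal nodes together with `g`; the parity hypothesis says exactly that
`|T|` is even. In a connected graph every even set of nodes `T` is the set of odd-degree nodes
of some subgraph `W` (a `T`-join): pair up the elements of `T`, join each pair by a walk, and take
the symmetric difference of the edge sets, which adds degrees modulo 2. Such a `W` is
semi-Kekulé, and since a port has degree 1 in `G`, it is covered by `W` exactly when its
`W`-degree is odd, i.e. exactly when it lies in `g`.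
-/

open scoped symmDiff

namespace Kekule

abbrev Node := ℕ
abbrev Graph := Finset (Finset Node)

/-- `G` is a graph: every edge is a 2-element set of nodes. -/
def IsGraph (G : Graph) : Prop := ∀ e ∈ G, e.card = 2

/-- The nodes of a graph: the elements of its edges. -/
def nodes (G : Graph) : Finset Node := G.biUnion id

/-- The number of edges of `G` containing `v`. -/
def deg (G : Graph) (v : Node) : ℕ := (G.filter (fun e => v ∈ e)).card

/-- A port is a node contained in exactly one edge. -/
def ports (G : Graph) : Finset Node := (nodes G).filter (fun v => deg G v = 1)

/-- An internal node is a node that is not a port. -/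
def internal (G : Graph) : Finset Node := (nodes G).filter (fun v => deg G v ≠ 1)

/-- A Kekulé state of `G`: a subgraph `W ⊆ G` such that every internal node
of `G` lies in exactly one edge of `W`. -/
def IsKekule (G W : Graph) : Prop := W ⊆ G ∧ ∀ v ∈ internal G, deg W v = 1

/-- A curve in `G`: a subgraph `C ⊆ G` such that every node of `C` that is
internal in `G` lies in exactly two edges of `C`. -/
def IsCurve (G C : Graph) : Prop :=
  C ⊆ G ∧ ∀ v ∈ nodes C, v ∈ internal G → deg C v = 2

/-- `(C, W)` is an alternating curve in `G`: both are subgraphs of `G`,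
`C` is a curve in `G`, and `W ∩ C` is a Kekulé state of `C`. -/
def IsAlternating (G C W : Graph) : Prop :=
  W ⊆ G ∧ IsCurve G C ∧ IsKekule C (W ∩ C)

/-- `W|P`: the set of ports in `P` that lie in some edge of `W`. -/
def rest (W : Graph) (P : Finset Node) : Finset Node := P ∩ nodes W

/-- The set of Kekulé port assignments of `G`. -/
def KP (G : Graph) : Set (Finset Node) :=
  {g | ∃ W, IsKekule G W ∧ rest W (ports G) = g}

/-- A cell `K` over `P` is a Kekulé cell if it is the set of Kekulé port
assignments of some graph with port set `P`. -/
def IsKekuleCell (P : Finset Node) (K : Set (Finset Node)) : Prop :=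
  ∃ G, IsGraph G ∧ ports G = P ∧ KP G = K

/-- A channel: a 2-element subset of `P`. -/
def IsChannel (P : Finset Node) (c : Finset Node) : Prop := c ⊆ P ∧ c.card = 2

/-- A port `p` is flexible for a cell `K`. -/
def Flexible (K : Set (Finset Node)) (p : Node) : Prop :=
  ∃ g ∈ K, ∃ g' ∈ K, p ∈ g ∧ p ∉ g'

/-- Hamming distance between two port assignments. -/
def hdist (k k' : Finset Node) : ℕ := (k ∆ k').card

/-- The Hamming diameter of `K` equals `n`. -/
def HamDiamEq (K : Set (Finset Node)) (n : ℕ) : Prop :=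
  (∃ k ∈ K, ∃ k' ∈ K, hdist k k' = n) ∧ ∀ k ∈ K, ∀ k' ∈ K, hdist k k' ≤ n

/-- `G` is connected: nonempty, and any two distinct nodes are joined by a walk. -/
def Connected (G : Graph) : Prop :=
  G.Nonempty ∧ ∀ p ∈ nodes G, ∀ q ∈ nodes G, p ≠ q →
    ∃ (n : ℕ) (f : ℕ → Node), f 0 = p ∧ f n = q ∧
      ∀ i < n, ({f i, f (i + 1)} : Finset Node) ∈ G

/-- `C` is a simple path between `p` and `q`. -/
def IsSimplePath (C : Graph) (p q : Node) : Prop :=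
  Connected C ∧ ports C = {p, q} ∧
    ∀ v ∈ nodes C, v ≠ p → v ≠ q → deg C v = 2

/-- A cycle: a connected graph all of whose nodes lie in exactly two edges. -/
def IsCycle (C : Graph) : Prop :=
  Connected C ∧ ∀ v ∈ nodes C, deg C v = 2

/-- A semi-Kekulé state of `G`: every internal node of `G` lies in an odd
number of edges of `W`. -/
def IsSemiKekule (G W : Graph) : Prop :=
  W ⊆ G ∧ ∀ v ∈ internal G, deg W v % 2 = 1

/-- The signature of `G`. -/
def sig (G : Graph) : ℕ := (internal G).card % 2

/-- `G` is omniconjugated. -/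
def Omniconjugated (G : Graph) : Prop :=
  2 ≤ (ports G).card ∧ KP G = {g | g ⊆ ports G ∧ g.card % 2 = sig G}

instance : Std.Commutative (α := Finset Node) (· ∆ ·) := ⟨symmDiff_comm⟩
instance : Std.Associative (α := Finset Node) (· ∆ ·) := ⟨symmDiff_assoc⟩

/-- The `⊕`-sum of a finite family of port assignments. -/
def xorSum (D : Finset (Finset Node)) : Finset Node := D.fold (· ∆ ·) ∅ id

lemma card_symmDiff_add_two_mul_card_inter {α : Type*} [DecidableEq α] (s t : Finset α) :
    (s ∆ t).card + 2 * (s ∩ t).card = s.card + t.card := by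
  rw [symmDiff_eq_sup_sdiff_inf, Finset.sup_eq_union, Finset.inf_eq_inter,
    Finset.card_sdiff_of_subset Finset.inter_subset_union, ← Finset.card_union_add_card_inter]
  have := Finset.card_le_card (Finset.inter_subset_union (s := s) (t := t))
  omega

lemma filter_symmDiff {α : Type*} [DecidableEq α] (p : α → Prop) [DecidablePred p]
    (s t : Finset α) : (s ∆ t).filter p = s.filter p ∆ t.filter p := by
  ext x
  simp only [Finset.mem_filter, Finset.mem_symmDiff]
  tauto

lemma deg_symmDiff_add_two_mul_deg_inter (A B : Graph) (v : Node) :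
    deg (A ∆ B) v + 2 * deg (A ∩ B) v = deg A v + deg B v := by
  simp only [deg, Finset.filter_inter_distrib, filter_symmDiff]
  exact card_symmDiff_add_two_mul_card_inter _ _

lemma deg_mono {A B : Graph} (h : A ⊆ B) (v : Node) : deg A v ≤ deg B v :=
  Finset.card_le_card (Finset.filter_subset_filter _ h)

lemma mem_nodes_iff_deg_pos (W : Graph) (v : Node) : v ∈ nodes W ↔ 0 < deg W v := by
  simp [nodes, deg, Finset.card_pos, Finset.filter_nonempty_iff]

def IsTJoin (G : Graph) (T : Finset Node) (W : Graph) : Prop :=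
  W ⊆ G ∧ ∀ v, Odd (deg W v) ↔ v ∈ T

lemma isTJoin_empty (G : Graph) : IsTJoin G ∅ ∅ :=
  ⟨Finset.empty_subset _, fun v => by simp [deg]⟩

lemma IsTJoin.symmDiff {G : Graph} {S T : Finset Node} {V W : Graph}
    (hV : IsTJoin G S V) (hW : IsTJoin G T W) : IsTJoin G (S ∆ T) (V ∆ W) := by
  refine ⟨symmDiff_le (le_sup_of_le_right hV.1) (le_sup_of_le_right hW.1), fun v => ?_⟩
  have hdeg := deg_symmDiff_add_two_mul_deg_inter V W v
  have hodd : Odd (deg (V ∆ W) v) ↔ Odd (deg V v + deg W v) := by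
    rw [← hdeg, Nat.odd_add, iff_true_right (even_two_mul _)]
  rw [hodd, Nat.odd_add, ← Nat.not_odd_iff_even, hV.2, hW.2, Finset.mem_symmDiff]
  tauto

lemma singleton_symmDiff_singleton {α : Type*} [DecidableEq α] {a b : α} (h : a ≠ b) :
    ({a} : Finset α) ∆ {b} = {a, b} :=
  Disjoint.symmDiff_eq_sup (Finset.disjoint_singleton.2 h)

lemma exists_isTJoin_of_mem {G : Graph} {x y : Node} (h : {x, y} ∈ G) :
    ∃ W, IsTJoin G ({x} ∆ {y}) W := by
  by_cases hxy : x = y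
  · exact ⟨∅, by simpa [hxy] using isTJoin_empty G⟩
  refine ⟨{{x, y}}, Finset.singleton_subset_iff.2 h, fun v => ?_⟩
  rw [singleton_symmDiff_singleton hxy]
  by_cases hv : v ∈ ({x, y} : Finset Node) <;> simp_all [deg, Finset.filter_singleton]

lemma exists_isTJoin_of_walk {G : Graph} (f : ℕ → Node) (n : ℕ)
    (hwalk : ∀ i < n, ({f i, f (i + 1)} : Finset Node) ∈ G) :
    ∃ W, IsTJoin G ({f 0} ∆ {f n}) W := by
  induction n with
  | zero => exact ⟨∅, by simpa using isTJoin_empty G⟩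
  | succ n ih =>
    obtain ⟨V, hV⟩ := ih fun i hi => hwalk i (by omega)
    obtain ⟨W, hW⟩ := exists_isTJoin_of_mem (hwalk n n.lt_succ_self)
    exact ⟨V ∆ W, by simpa [symmDiff_assoc] using hV.symmDiff hW⟩

lemma Connected.exists_isTJoin_pair {G : Graph} (hG : Connected G) {a b : Node}
    (ha : a ∈ nodes G) (hb : b ∈ nodes G) (hab : a ≠ b) : ∃ W, IsTJoin G {a, b} W := by
  obtain ⟨n, f, rfl, rfl, hwalk⟩ := hG.2 a ha b hb hab
  rw [← singleton_symmDiff_singleton hab]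
  exact exists_isTJoin_of_walk f n hwalk

theorem Connected.exists_isTJoin {G : Graph} (hG : Connected G) (T : Finset Node)
    (hT : T ⊆ nodes G) (heven : Even T.card) : ∃ W, IsTJoin G T W := by
  induction T using Finset.strongInduction with
  | H T ih =>
    obtain rfl | ⟨a, ha⟩ := T.eq_empty_or_nonempty
    · exact ⟨∅, isTJoin_empty G⟩
    obtain ⟨b, hb⟩ : (T.erase a).Nonempty := by
      rw [← Finset.card_pos, Finset.card_erase_of_mem ha]
      have := Finset.card_pos.2 ⟨a, ha⟩
      rcases heven with ⟨k, hk⟩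
      omega
    have hab : a ≠ b := (Finset.ne_of_mem_erase hb).symm
    have hpair : {a, b} ⊆ T :=
      Finset.insert_subset ha (Finset.singleton_subset_iff.2 (Finset.mem_of_mem_erase hb))
    have hcard : (T \ {a, b}).card + 2 = T.card := by
      have := Finset.card_le_card hpair
      rw [Finset.card_sdiff_of_subset hpair, Finset.card_pair hab] at *
      omega
    obtain ⟨V, hV⟩ := ih (T \ {a, b}) (Finset.sdiff_ssubset hpair ⟨a, by simp⟩)
      (Finset.sdiff_subset.trans hT) (by rw [Nat.even_iff] at heven ⊢; omega)
    obtain ⟨W, hW⟩ := hG.exists_isTJoin_pair (hT ha) (hT (hpair (by simp))) hab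
    refine ⟨V ∆ W, ?_⟩
    simpa [← symmDiff_of_ge hpair, symmDiff_symmDiff_cancel_right] using hV.symmDiff hW

lemma IsTJoin.rest_ports {G : Graph} {T : Finset Node} {W : Graph} (hW : IsTJoin G T W) :
    rest W (ports G) = ports G ∩ T := by
  ext p
  simp only [rest, Finset.mem_inter, ← hW.2, mem_nodes_iff_deg_pos, and_congr_right_iff]
  intro hp
  have h1 : deg G p = 1 := (Finset.mem_filter.1 hp).2
  have := deg_mono hW.1 p
  constructor
  · intro h; exact ⟨0, by omega⟩
  · rintro ⟨k, hk⟩; omega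

theorem statement12_general (G : Graph) (hconn : Connected G)
    (g : Finset Node) (hg : g ⊆ ports G) (hpar : g.card % 2 = sig G) :
    ∃ W : Graph, IsSemiKekule G W ∧ rest W (ports G) = g := by
  have hdisj : Disjoint (internal G) (ports G) := by
    rw [internal, ports, Finset.disjoint_filter]
    exact fun _ _ h => h
  have hsub : internal G ∪ g ⊆ nodes G :=
    Finset.union_subset (Finset.filter_subset _ _) (hg.trans (Finset.filter_subset _ _))
  have heven : Even (internal G ∪ g).card := by
    rw [Finset.card_union_of_disjoint (hdisj.mono_right hg), Nat.even_iff]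
    rw [sig] at hpar
    omega
  obtain ⟨W, hW⟩ := hconn.exists_isTJoin _ hsub heven
  refine ⟨W, ⟨hW.1, fun v hv => Nat.odd_iff.1 ((hW.2 v).2 (Finset.mem_union_left _ hv))⟩, ?_⟩
  rw [hW.rest_ports, Finset.inter_union_distrib_left,
    Finset.disjoint_iff_inter_eq_empty.1 hdisj.symm, Finset.empty_union, Finset.inter_eq_right.2 hg]

/-- A connected graph has a semi-Kekulé state realizing any
port assignment of the right parity. -/
theorem statement12 (G : Graph) (hG : IsGraph G) (hconn : Connected G)
    (g : Finset Node) (hg : g ⊆ ports G) (hpar : g.card % 2 = sig G) :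
    ∃ W : Graph, IsSemiKekule G W ∧ rest W (ports G) = g :=
  statement12_general G hconn g hg hpar

end Kekule
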